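/- There exists a constant C = C(d) such that for all ε ∈ (0,1], Σ_{(n,m) ∈ ℕ^{2d}} (1 + ε(|n+m| + d) + |n−m|)^{−2d−2} ≤ C ε^{−d}. -/

import Mathlib

/-!
Write `aⱼ = min(nⱼ, mⱼ)` and `kⱼ = |nⱼ - mⱼ|`. Every factor `1 + ε aⱼ` and `1 + kⱼ` is bounded by
the base of the weight, so with `t = 1 + 1/(d+1) > 1` (for which `2dt ≤ 2d + 2`) the weight is
at most `∏ⱼ (1 + ε aⱼ)^(-t) (1 + kⱼ)^(-t)`. Since `(n, m) ↦ (a, k)` is at most two-to-one in each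
coordinate, the sum factorises into `(2 Σₐ (1 + ε a)^(-t) · Σₖ (1 + k)^(-t))^d`, and cutting `ℕ`
into blocks of length `⌈1/ε⌉` gives `Σₐ (1 + ε a)^(-t) ≤ (2/ε) Σₖ (1 + k)^(-t)`.
-/

open scoped ENNReal

namespace ENNReal

theorem tsum_pi_prod_eq_pow {α : Type*} (f : α → ℝ≥0∞) (d : ℕ) :
    ∑' q : Fin d → α, ∏ j, f (q j) = (∑' a, f a) ^ d := by
  induction d with
  | zero => simp
  | succ d ih =>
    rw [← (Fin.consEquiv fun _ ↦ α).tsum_eq, ENNReal.tsum_prod']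
    simp only [Fin.consEquiv_apply, Fin.prod_univ_succ, Fin.cons_zero, Fin.cons_succ,
      ENNReal.tsum_mul_left, ih, ENNReal.tsum_mul_right, pow_succ']

theorem tsum_le_mul_tsum_comp_mul_of_antitone {f : ℕ → ℝ≥0∞} (hf : Antitone f) (N : ℕ)
    [NeZero N] : ∑' n, f n ≤ N * ∑' q, f (q * N) := by
  rw [← (Nat.divModEquiv N).symm.tsum_eq, ENNReal.tsum_prod', ← ENNReal.tsum_mul_left]
  gcongr with q
  calc ∑' r : Fin N, f ((Nat.divModEquiv N).symm (q, r))
      ≤ ∑' _r : Fin N, f (q * N) := ENNReal.tsum_le_tsum fun r ↦ hf (Nat.le_add_right _ _)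
    _ = N * f (q * N) := by simp [tsum_fintype]

theorem tsum_min_dist_le (F G : ℕ → ℝ≥0∞) :
    ∑' x : ℕ × ℕ, F (min x.1 x.2) * G (Nat.dist x.1 x.2) ≤ 2 * ((∑' a, F a) * ∑' b, G b) := by
  let e : ℕ × ℕ → Bool × ℕ × ℕ := fun x ↦ (decide (x.1 ≤ x.2), min x.1 x.2, Nat.dist x.1 x.2)
  have he : Function.Injective e := by
    rintro ⟨a, b⟩ ⟨c, d⟩ h
    simp only [e, Prod.mk.injEq, decide_eq_decide] at h
    unfold Nat.dist at h
    simp only [Prod.mk.injEq]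
    omega
  calc ∑' x : ℕ × ℕ, F (min x.1 x.2) * G (Nat.dist x.1 x.2)
      = ∑' x, (fun y : Bool × ℕ × ℕ ↦ F y.2.1 * G y.2.2) (e x) := rfl
    _ ≤ ∑' y : Bool × ℕ × ℕ, F y.2.1 * G y.2.2 := ENNReal.tsum_comp_le_tsum_of_injective he _
    _ = 2 * ((∑' a, F a) * ∑' b, G b) := by
      simp only [ENNReal.tsum_prod', tsum_fintype, Fintype.sum_bool, ENNReal.tsum_mul_left,
        ENNReal.tsum_mul_right, two_mul]

end ENNReal

theorem Nat.cast_dist_eq_abs (a b : ℕ) : (Nat.dist a b : ℝ) = |(a : ℝ) - b| := by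
  rcases le_total a b with h | h
  · rw [Nat.dist_eq_sub_of_le h, Nat.cast_sub h, abs_sub_comm, abs_of_nonneg (by simpa)]
  · rw [Nat.dist_eq_sub_of_le_right h, Nat.cast_sub h, abs_of_nonneg (by simpa)]

theorem Real.rpow_neg_card_mul_le_prod {ι : Type*} [Fintype ι] {x : ι → ℝ} {B t : ℝ}
    (hB : 0 ≤ B) (hx : ∀ i, 1 ≤ x i) (hxB : ∀ i, x i ≤ B) (ht : 0 ≤ t) :
    B ^ (-(Fintype.card ι * t)) ≤ ∏ i, x i ^ (-t) := by
  rw [Real.finsetProd_rpow _ _ (fun i _ ↦ by linarith [hx i]), neg_mul_eq_mul_neg,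
    Real.rpow_mul hB, Real.rpow_natCast]
  refine Real.rpow_le_rpow_of_nonpos (Finset.prod_pos fun i _ ↦ by linarith [hx i]) ?_ (by linarith)
  calc ∏ i, x i ≤ ∏ _i : ι, B := Finset.prod_le_prod (fun i _ ↦ by linarith [hx i]) fun i _ ↦ hxB i
    _ = B ^ Fintype.card ι := by simp

theorem ENNReal.tsum_ofReal_one_add_mul_rpow_neg_le {ε s : ℝ} (hε : 0 < ε) (hε1 : ε ≤ 1)
    (hs : 0 ≤ s) :
    ∑' n : ℕ, ENNReal.ofReal ((1 + ε * n) ^ (-s)) ≤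
      2 * ENNReal.ofReal ε⁻¹ * ∑' k : ℕ, ENNReal.ofReal ((1 + k) ^ (-s)) := by
  set N := ⌈ε⁻¹⌉₊
  have hεN : 1 ≤ ε * N := by
    calc 1 = ε * ε⁻¹ := (mul_inv_cancel₀ hε.ne').symm
      _ ≤ ε * N := by gcongr; exact Nat.le_ceil _
  have : NeZero N := ⟨(Nat.ceil_pos.2 (inv_pos.2 hε)).ne'⟩
  have hanti : Antitone fun n : ℕ ↦ ENNReal.ofReal ((1 + ε * n) ^ (-s)) := fun a b hab ↦
    ENNReal.ofReal_le_ofReal <|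
      Real.rpow_le_rpow_of_nonpos (by positivity) (by gcongr) (by linarith)
  calc _ ≤ N * ∑' q : ℕ, ENNReal.ofReal ((1 + ε * ↑(q * N)) ^ (-s)) :=
        ENNReal.tsum_le_mul_tsum_comp_mul_of_antitone hanti N
    _ ≤ 2 * ENNReal.ofReal ε⁻¹ * ∑' k : ℕ, ENNReal.ofReal ((1 + k) ^ (-s)) := by
      refine mul_le_mul' ?_ (ENNReal.tsum_le_tsum fun q ↦ ?_)
      · rw [← ENNReal.ofReal_natCast, ← ENNReal.ofReal_ofNat 2, ← ENNReal.ofReal_mul (by norm_num)]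
        exact ENNReal.ofReal_le_ofReal (Nat.ceil_le_two_mul (by rw [inv_le_inv₀] <;> linarith))
      · refine ENNReal.ofReal_le_ofReal <|
          Real.rpow_le_rpow_of_nonpos (by positivity : (0 : ℝ) < 1 + q) ?_ (by linarith)
        push_cast
        nlinarith [(Nat.cast_nonneg q : (0 : ℝ) ≤ q)]

theorem Real.tsum_le_of_tsum_ofReal_le {α : Type*} {f : α → ℝ} {b : ℝ} (hf : ∀ a, 0 ≤ f a)
    (hb : 0 ≤ b) (h : ∑' a, ENNReal.ofReal (f a) ≤ ENNReal.ofReal b) : ∑' a, f a ≤ b :=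
  calc ∑' a, f a = ∑' a, (ENNReal.ofReal (f a)).toReal := by simp_rw [ENNReal.toReal_ofReal (hf _)]
    _ = (∑' a, ENNReal.ofReal (f a)).toReal :=
      (ENNReal.tsum_toReal_eq fun _ ↦ ENNReal.ofReal_ne_top).symm
    _ ≤ b := ENNReal.toReal_le_of_le_ofReal hb h

theorem ENNReal.tsum_ofReal_one_add_nat_rpow_neg_ne_top {t : ℝ} (ht : 1 < t) :
    ∑' k : ℕ, ENNReal.ofReal ((1 + k) ^ (-t)) ≠ ∞ := by
  have := (summable_nat_add_iff 1).2 (Real.summable_nat_rpow.2 (by linarith : -t < -1))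
  exact Summable.tsum_ofReal_ne_top (by simpa [add_comm] using this)

theorem ENNReal.one_le_tsum_ofReal_one_add_nat_rpow_neg (t : ℝ) :
    1 ≤ ∑' k : ℕ, ENNReal.ofReal ((1 + k) ^ (-t)) := by
  simpa using ENNReal.le_tsum (f := fun k : ℕ ↦ ENNReal.ofReal ((1 + k) ^ (-t))) 0

noncomputable def weight (d : ℕ) (ε : ℝ) (n m : Fin d → ℕ) : ℝ :=
  (1 + ε * ((∑ j, ((n j : ℝ) + m j)) + d) + (∑ j, |(n j : ℝ) - m j|)) ^ (-2 * (d : ℝ) - 2)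

theorem weight_nonneg (d : ℕ) {ε : ℝ} (hε : 0 < ε) (n m : Fin d → ℕ) : 0 ≤ weight d ε n m := by
  unfold weight
  positivity

theorem weight_le_prod {d : ℕ} {ε t : ℝ} (hε : 0 < ε) (ht : 0 ≤ t) (hdt : d * t ≤ d + 1)
    (n m : Fin d → ℕ) :
    weight d ε n m ≤
      ∏ j, (1 + ε * (min (n j) (m j) : ℕ)) ^ (-t) * (1 + (Nat.dist (n j) (m j) : ℝ)) ^ (-t) := by
  set B := 1 + ε * ((∑ j, ((n j : ℝ) + m j)) + d) + (∑ j, |(n j : ℝ) - m j|)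
  have hsum : 0 ≤ ∑ j, ((n j : ℝ) + m j) := by positivity
  have habs : 0 ≤ ∑ j, |(n j : ℝ) - m j| := by positivity
  have hdist : ∀ j, 1 + (Nat.dist (n j) (m j) : ℝ) ≤ B := fun j ↦ by
    have := Finset.single_le_sum (fun i _ ↦ abs_nonneg ((n i : ℝ) - m i)) (Finset.mem_univ j)
    rw [Nat.cast_dist_eq_abs]
    nlinarith
  have hmin : ∀ j, 1 + ε * (min (n j) (m j) : ℕ) ≤ B := fun j ↦ by
    have := Finset.single_le_sum (fun i _ ↦ by positivity : ∀ i ∈ Finset.univ, 0 ≤ (n i : ℝ) + m i)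
      (Finset.mem_univ j)
    have : ((min (n j) (m j) : ℕ) : ℝ) ≤ n j + m j := by
      exact_mod_cast (min_le_left _ _).trans (Nat.le_add_right _ _)
    nlinarith
  have hB : 1 ≤ B := by
    have : 0 ≤ ε * ((∑ j, ((n j : ℝ) + m j)) + d) := by positivity
    linarith
  calc weight d ε n m ≤ (B ^ 2) ^ (-(Fintype.card (Fin d) * t)) := by
        rw [weight, ← Real.rpow_natCast, ← Real.rpow_mul (by linarith), Fintype.card_fin]
        exact Real.rpow_le_rpow_of_exponent_le hB (by push_cast; linarith)
    _ ≤ ∏ j, ((1 + ε * (min (n j) (m j) : ℕ)) * (1 + (Nat.dist (n j) (m j) : ℝ))) ^ (-t) := by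
        refine Real.rpow_neg_card_mul_le_prod (by positivity) (fun j ↦ ?_) (fun j ↦ ?_) ht
        · exact one_le_mul_of_one_le_of_one_le (by simp; positivity) (by simp)
        · rw [sq]
          exact mul_le_mul (hmin j) (hdist j) (by positivity) (by positivity)
    _ = _ := Finset.prod_congr rfl fun j _ ↦ Real.mul_rpow (by positivity) (by positivity)

theorem tsum_ofReal_weight_le {d : ℕ} {ε t : ℝ} (hε : 0 < ε) (hε1 : ε ≤ 1) (ht : 0 ≤ t)
    (hdt : d * t ≤ d + 1) :
    ∑' p : (Fin d → ℕ) × (Fin d → ℕ), ENNReal.ofReal (weight d ε p.1 p.2) ≤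
      (4 * (∑' k : ℕ, ENNReal.ofReal ((1 + k) ^ (-t))) ^ 2) ^ d * ENNReal.ofReal ε⁻¹ ^ d := by
  set K := ∑' k : ℕ, ENNReal.ofReal ((1 + k) ^ (-t))
  set G : ℕ × ℕ → ℝ≥0∞ := fun x ↦ ENNReal.ofReal ((1 + ε * (min x.1 x.2 : ℕ)) ^ (-t)) *
    ENNReal.ofReal ((1 + (Nat.dist x.1 x.2 : ℝ)) ^ (-t))
  calc _ ≤ ∑' p : (Fin d → ℕ) × (Fin d → ℕ), ∏ j, G (p.1 j, p.2 j) := by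
        refine ENNReal.tsum_le_tsum fun p ↦ ?_
        rw [← Finset.prod_congr rfl fun j _ ↦ ENNReal.ofReal_mul (by positivity),
          ← ENNReal.ofReal_prod_of_nonneg fun j _ ↦ by positivity]
        exact ENNReal.ofReal_le_ofReal (weight_le_prod hε ht hdt p.1 p.2)
    _ = ∑' q : Fin d → ℕ × ℕ, ∏ j, G (q j) :=
        ((Equiv.arrowProdEquivProdArrow (Fin d) (fun _ ↦ ℕ) (fun _ ↦ ℕ)).tsum_eq _).symm
    _ = (∑' x, G x) ^ d := ENNReal.tsum_pi_prod_eq_pow G d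
    _ ≤ (2 * ((2 * ENNReal.ofReal ε⁻¹ * K) * K)) ^ d := by
        gcongr
        refine (ENNReal.tsum_min_dist_le (fun a ↦ ENNReal.ofReal ((1 + ε * a) ^ (-t)))
          (fun b ↦ ENNReal.ofReal ((1 + b) ^ (-t)))).trans ?_
        gcongr
        exact ENNReal.tsum_ofReal_one_add_mul_rpow_neg_le hε hε1 ht
    _ = (4 * K ^ 2) ^ d * ENNReal.ofReal ε⁻¹ ^ d := by ring

/-- There exists `C = C(d)` such that for all `ε ∈ (0,1]`,
`Σ_{(n,m) ∈ ℕ^{2d}} (1 + ε(|n+m| + d) + |n−m|)^{−2d−2} ≤ C ε^{−d}`. -/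
theorem sum_weight_bound (d : ℕ) :
    ∃ C : ℝ, 0 < C ∧ ∀ ε : ℝ, 0 < ε → ε ≤ 1 →
      ∑' p : (Fin d → ℕ) × (Fin d → ℕ),
        (1 + ε * ((∑ j, ((p.1 j : ℝ) + p.2 j)) + d)
            + (∑ j, |(p.1 j : ℝ) - p.2 j|)) ^ (-2 * (d : ℝ) - 2)
      ≤ C * ε ^ (-(d : ℝ)) := by
  set t : ℝ := 1 + 1 / (d + 1)
  have ht : 1 < t := lt_add_of_pos_right 1 (by positivity)
  have hdt : d * t ≤ d + 1 := by
    rw [mul_add, mul_one, mul_one_div]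
    gcongr
    exact div_le_one_of_le₀ (by linarith) (by positivity)
  set K := ∑' k : ℕ, ENNReal.ofReal ((1 + k) ^ (-t))
  have hK0 : K ≠ 0 := (zero_lt_one.trans_le (ENNReal.one_le_tsum_ofReal_one_add_nat_rpow_neg t)).ne'
  have hC : (4 * K ^ 2) ^ d ≠ ∞ := ENNReal.pow_ne_top <| ENNReal.mul_ne_top (by norm_num) <|
    ENNReal.pow_ne_top (ENNReal.tsum_ofReal_one_add_nat_rpow_neg_ne_top ht)
  refine ⟨((4 * K ^ 2) ^ d).toReal, ENNReal.toReal_pos (by simp [hK0]) hC, fun ε hε hε1 ↦ ?_⟩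
  refine Real.tsum_le_of_tsum_ofReal_le (fun p ↦ weight_nonneg d hε p.1 p.2) (by positivity)
    ((tsum_ofReal_weight_le hε hε1 (by linarith) hdt).trans_eq ?_)
  rw [ENNReal.ofReal_mul (by positivity), ENNReal.ofReal_toReal hC, Real.rpow_neg hε.le,
    Real.rpow_natCast, ← inv_pow, ENNReal.ofReal_pow (by positivity)]
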